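/- arXiv:1410.2556 — 7 statements merged into one kernel-verified Lean document; each statement's English description precedes it below -/
import Mathlib

section
/- For any convex body K in R^n, the volume of the difference body satisfies |K - K| ≤ binom(2n, n) |K|. -/
/-!
By Fubini, `∫ |K ∩ (x + K)| dx = |K|²`. If `x = λ (a - b)` with `a, b ∈ K` and `0 ≤ λ ≤ 1`, then
`λ a + (1 - λ) K` lies in both `K` and `x + K`; hence `|K ∩ (x + K)| ≥ (1 - g x)ⁿ |K|`, where `g` is
the gauge of `K - K`. By the layer cake formula the integral of `(1 - g)₊ⁿ` is
`|K - K| · n B(n, n + 1) = |K - K| / binom(2n, n)`, and comparing the two integrals gives the bound.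
-/

open MeasureTheory Set Pointwise Module
open scoped ENNReal Nat Topology

theorem integral_pow_mul_one_sub_pow (m k : ℕ) :
    ∫ t in (0 : ℝ)..1, t ^ m * (1 - t) ^ k = (m ! * k ! / (m + k + 1)! : ℝ) := by
  induction k generalizing m with
  | zero =>
    simp only [pow_zero, mul_one, integral_pow, one_pow, zero_pow m.succ_ne_zero, sub_zero,
      Nat.factorial_zero, add_zero, Nat.factorial_succ]
    push_cast
    field_simp
  | succ k ih =>
    have hsplit (t : ℝ) :
        t ^ m * (1 - t) ^ (k + 1) = t ^ m * (1 - t) ^ k - t ^ (m + 1) * (1 - t) ^ k := by ring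
    simp_rw [hsplit]
    rw [intervalIntegral.integral_sub ((by fun_prop : Continuous _).intervalIntegrable _ _)
      ((by fun_prop : Continuous _).intervalIntegrable _ _), ih, ih,
      show m + 1 + k + 1 = m + (k + 1) + 1 by omega]
    push_cast [Nat.factorial_succ, show m + (k + 1) = m + k + 1 by omega]
    field_simp
    ring

theorem lintegral_Ioi_ofReal_one_sub_pow_mul {n : ℕ} (hn : 0 < n) :
    ∫⁻ t in Ioi (0 : ℝ), ENNReal.ofReal (1 - t) ^ n * ENNReal.ofReal (n * t ^ (n - 1)) =
      ((2 * n).choose n : ℝ≥0∞)⁻¹ := by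
  obtain ⟨m, rfl⟩ := Nat.exists_eq_add_of_lt hn
  simp only [zero_add, add_tsub_cancel_right]
  have hzero : ∫⁻ t in Ioi (1 : ℝ), ENNReal.ofReal (1 - t) ^ (m + 1) *
      ENNReal.ofReal ((m + 1 : ℕ) * t ^ m) = 0 := by
    refine (setLIntegral_congr_fun measurableSet_Ioi fun t (ht : 1 < t) => ?_).trans
      (lintegral_zero (μ := volume.restrict _))
    rw [ENNReal.ofReal_of_nonpos (by linarith), zero_pow m.succ_ne_zero, zero_mul]
  have hbeta : ∫ t in (0 : ℝ)..1, (1 - t) ^ (m + 1) * ((m + 1 : ℕ) * t ^ m) =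
      ((2 * (m + 1)).choose (m + 1) : ℝ)⁻¹ := by
    have hcomm (t : ℝ) : (1 - t) ^ (m + 1) * ((m + 1 : ℕ) * t ^ m) =
        (m + 1 : ℕ) * (t ^ m * (1 - t) ^ (m + 1)) := by ring
    simp_rw [hcomm]
    rw [intervalIntegral.integral_const_mul, integral_pow_mul_one_sub_pow,
      Nat.cast_choose ℝ (by omega : m + 1 ≤ 2 * (m + 1)),
      show 2 * (m + 1) - (m + 1) = m + 1 by omega, show m + (m + 1) + 1 = 2 * (m + 1) by omega]
    push_cast [Nat.factorial_succ]
    field_simp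
  have hchoose : (0 : ℝ) < (2 * (m + 1)).choose (m + 1) :=
    Nat.cast_pos.2 (Nat.choose_pos (by omega))
  rw [← Ioc_union_Ioi_eq_Ioi zero_le_one,
    lintegral_union measurableSet_Ioi (Ioc_disjoint_Ioi le_rfl), hzero, add_zero,
    setLIntegral_congr_fun measurableSet_Ioc fun t ht => by
      rw [← ENNReal.ofReal_pow (sub_nonneg.2 ht.2),
        ← ENNReal.ofReal_mul (pow_nonneg (sub_nonneg.2 ht.2) _)],
    ← ofReal_integral_eq_lintegral_ofReal, ← intervalIntegral.integral_of_le zero_le_one, hbeta,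
    ENNReal.ofReal_inv_of_pos hchoose, ENNReal.ofReal_natCast]
  · exact (by fun_prop : Continuous _).integrableOn_Ioc
  · exact ae_restrict_of_forall_mem measurableSet_Ioc fun t ht => mul_nonneg
      (pow_nonneg (sub_nonneg.2 ht.2) _) (mul_nonneg (Nat.cast_nonneg _) (pow_nonneg ht.1.le _))

theorem IsCompact.sub {G : Type*} [TopologicalSpace G] [Sub G] [ContinuousSub G] {s t : Set G}
    (hs : IsCompact s) (ht : IsCompact t) : IsCompact (s - t) := by
  rw [← sub_image_prod]
  exact (hs.prod ht).image continuous_sub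

theorem lintegral_measure_inter_vadd_self {G : Type*} [AddCommGroup G] [MeasurableSpace G]
    [MeasurableAdd₂ G] (μ : Measure G) [SFinite μ] [μ.IsAddLeftInvariant]
    {s : Set G} (hs : MeasurableSet s) :
    ∫⁻ x, μ (s ∩ (x +ᵥ s)) ∂μ = μ s * μ s := by
  have hmeas : Measurable (s.indicator (1 : G → ℝ≥0∞)) := measurable_one.indicator hs
  have hind (x : G) : μ (s ∩ (x +ᵥ s)) = ∫⁻ y, s.indicator 1 (y + x) * s.indicator 1 y ∂μ := by
    classical
    rw [← measure_vadd μ (-x), vadd_set_inter, neg_vadd_vadd,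
      ← lintegral_indicator_one ((hs.const_vadd _).inter hs), inter_indicator_one]
    refine lintegral_congr fun y => ?_
    simp only [Pi.mul_apply, indicator_apply, mem_vadd_set_iff_neg_vadd_mem, neg_neg, vadd_eq_add,
      add_comm x, Pi.one_apply]
  calc ∫⁻ x, μ (s ∩ (x +ᵥ s)) ∂μ
      = ∫⁻ x, ∫⁻ y, s.indicator 1 (y + x) * s.indicator 1 y ∂μ ∂μ := lintegral_congr hind
    _ = ∫⁻ y, (∫⁻ x, s.indicator 1 (y + x) ∂μ) * s.indicator 1 y ∂μ := by
      rw [lintegral_lintegral_swap ((hmeas.comp (measurable_snd.add measurable_fst)).mul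
        (hmeas.comp measurable_snd)).aemeasurable]
      exact lintegral_congr fun y => lintegral_mul_const _ (hmeas.comp (measurable_const_add y))
    _ = μ s * μ s := by
      simp_rw [lintegral_add_left_eq_self (s.indicator (1 : G → ℝ≥0∞)),
        lintegral_indicator_one hs]
      rw [lintegral_const_mul _ hmeas, lintegral_indicator_one hs]

section NormedSpace

variable {E : Type*} [NormedAddCommGroup E] [NormedSpace ℝ E]

theorem setOfPred_gauge_le_eq_smul {D : Set E} (hc : Convex ℝ D) (hD₀ : D ∈ 𝓝 0)
    (hcl : IsClosed D) (hb : Bornology.IsBounded D) {s : ℝ} (hs : 0 ≤ s) :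
    {x | gauge D x ≤ s} = s • D := by
  ext x
  rcases hs.eq_or_lt with rfl | hs
  · have hzero := gauge_eq_zero (x := x) (absorbent_nhds_zero hD₀)
      (NormedSpace.isVonNBounded_of_isBounded ℝ hb)
    rw [zero_smul_set ⟨0, mem_of_mem_nhds hD₀⟩, mem_zero, ← hzero, mem_ofPred_eq,
      (gauge_nonneg x).ge_iff_eq']
  · have hmem (y : E) : y ∈ D ↔ gauge D y ≤ 1 := by
      rw [gauge_le_one_iff_mem_closure hc hD₀, hcl.closure_eq]
    rw [mem_smul_set_iff_inv_smul_mem₀ hs.ne', hmem, mem_ofPred_eq,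
      gauge_smul_of_nonneg (inv_nonneg.2 hs.le), smul_eq_mul, inv_mul_le_iff₀ hs, mul_one]

variable [FiniteDimensional ℝ E] [MeasurableSpace E] [BorelSpace E]
  (μ : Measure E) [μ.IsAddHaarMeasure]

theorem Convex.ofReal_one_sub_pow_mul_le_measure_inter_vadd {K : Set E} (hK : Convex ℝ K)
    {l : ℝ} (hl₀ : 0 ≤ l) (hl₁ : l ≤ 1) {x : E} (hx : x ∈ l • (K - K)) :
    ENNReal.ofReal (1 - l) ^ finrank ℝ E * μ K ≤ μ (K ∩ (x +ᵥ K)) := by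
  obtain ⟨_, ⟨a, ha, b, hb, rfl⟩, rfl⟩ := hx
  have hsub : l • a +ᵥ (1 - l) • K ⊆ K ∩ (l • (a - b) +ᵥ K) := by
    rintro _ ⟨_, ⟨y, hy, rfl⟩, rfl⟩
    refine ⟨hK ha hy hl₀ (sub_nonneg.2 hl₁) (add_sub_cancel _ _), l • b + (1 - l) • y,
      hK hb hy hl₀ (sub_nonneg.2 hl₁) (add_sub_cancel _ _), ?_⟩
    simp only [vadd_eq_add, smul_sub]
    abel
  calc ENNReal.ofReal (1 - l) ^ finrank ℝ E * μ K = μ (l • a +ᵥ (1 - l) • K) := by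
        rw [measure_vadd, Measure.addHaar_smul, abs_of_nonneg (pow_nonneg (sub_nonneg.2 hl₁) _),
          ENNReal.ofReal_pow (sub_nonneg.2 hl₁)]
    _ ≤ μ (K ∩ (l • (a - b) +ᵥ K)) := measure_mono hsub

variable [Nontrivial E]

theorem Convex.ofReal_one_sub_gauge_pow_mul_le_measure_inter_vadd {K : Set E} (hK : Convex ℝ K)
    (hKc : IsCompact K) (hK₀ : K - K ∈ 𝓝 0) (x : E) :
    ENNReal.ofReal (1 - gauge (K - K) x) ^ finrank ℝ E * μ K ≤ μ (K ∩ (x +ᵥ K)) := by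
  rcases le_or_gt 1 (gauge (K - K) x) with hx | hx
  · rw [ENNReal.ofReal_of_nonpos (sub_nonpos.2 hx), zero_pow finrank_pos.ne', zero_mul]
    exact zero_le
  · refine hK.ofReal_one_sub_pow_mul_le_measure_inter_vadd μ (gauge_nonneg x) hx.le ?_
    rw [← setOfPred_gauge_le_eq_smul (hK.sub hK) hK₀ (hKc.sub hKc).isClosed
      (hKc.sub hKc).isBounded (gauge_nonneg x)]
    exact le_refl (gauge (K - K) x)

theorem addHaar_setOfPred_gauge_le {D : Set E} (hc : Convex ℝ D) (hD₀ : D ∈ 𝓝 0)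
    (hcl : IsClosed D) (hb : Bornology.IsBounded D) (s : ℝ) :
    μ {x | gauge D x ≤ s} = ENNReal.ofReal s ^ finrank ℝ E * μ D := by
  rcases le_or_gt 0 s with hs | hs
  · rw [setOfPred_gauge_le_eq_smul hc hD₀ hcl hb hs, Measure.addHaar_smul,
      abs_of_nonneg (pow_nonneg hs _), ENNReal.ofReal_pow hs]
  · have hempty : {x | gauge D x ≤ s} = ∅ :=
      eq_empty_of_forall_notMem fun x hx => (hs.trans_le (gauge_nonneg x)).not_ge hx
    rw [hempty, ENNReal.ofReal_of_nonpos hs.le, zero_pow finrank_pos.ne', zero_mul, measure_empty]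

theorem lintegral_ofReal_one_sub_gauge_pow {D : Set E} (hc : Convex ℝ D) (hD₀ : D ∈ 𝓝 0)
    (hcl : IsClosed D) (hb : Bornology.IsBounded D) :
    ∫⁻ x, ENNReal.ofReal (1 - gauge D x) ^ finrank ℝ E ∂μ =
      μ D / (2 * finrank ℝ E).choose (finrank ℝ E) := by
  set n := finrank ℝ E
  have hn : 0 < n := finrank_pos
  set f : E → ℝ := fun x => max (1 - gauge D x) 0
  have hfc : Continuous f := (continuous_const.sub (continuous_gauge hc hD₀)).max continuous_const
  have hf (x : E) :
      ENNReal.ofReal (1 - gauge D x) ^ n = ENNReal.ofReal (∫ t in 0..f x, n * t ^ (n - 1)) := by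
    have hn' : (n : ℝ) ≠ 0 := by positivity
    rw [intervalIntegral.integral_const_mul, integral_pow, Nat.sub_add_cancel hn,
      Nat.cast_pred hn, sub_add_cancel, zero_pow hn.ne', sub_zero, mul_div_cancel₀ _ hn',
      ENNReal.ofReal_pow (le_max_right _ _), ENNReal.ofReal_max, ENNReal.ofReal_zero,
      max_eq_left zero_le]
  have hlevel (t : ℝ) (ht : 0 < t) : {x | t ≤ f x} = {x | gauge D x ≤ 1 - t} := by
    ext x
    simp only [f, mem_ofPred_eq, le_max_iff, ht.not_ge, or_false, le_sub_comm]
  rw [lintegral_congr hf, lintegral_comp_eq_lintegral_meas_le_mul (f := f) μ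
      (Filter.Eventually.of_forall fun x => le_max_right _ _) hfc.aemeasurable
      (fun t _ => (by fun_prop : Continuous _).intervalIntegrable 0 t)
      (ae_restrict_of_forall_mem measurableSet_Ioi fun t (ht : 0 < t) => by positivity),
    setLIntegral_congr_fun measurableSet_Ioi fun t ht => by
      rw [hlevel t ht, addHaar_setOfPred_gauge_le μ hc hD₀ hcl hb, mul_right_comm],
    lintegral_mul_const' _ _ hb.measure_lt_top.ne, lintegral_Ioi_ofReal_one_sub_pow_mul hn,
    div_eq_mul_inv, mul_comm]

theorem Convex.addHaar_sub_self_le_choose_mul {K : Set E} (hK : Convex ℝ K) (hKc : IsCompact K)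
    (hK₀ : μ K ≠ 0) :
    μ (K - K) ≤ (2 * finrank ℝ E).choose (finrank ℝ E) * μ K := by
  set n := finrank ℝ E
  have hKt : μ K ≠ ∞ := hKc.measure_lt_top.ne
  have hD₀ : K - K ∈ 𝓝 0 := Measure.sub_mem_nhds_zero_of_addHaar_pos_ne_top μ K
    hKc.measurableSet (pos_iff_ne_zero.2 hK₀) hKt
  have key : μ (K - K) / (2 * n).choose n * μ K ≤ μ K * μ K := calc
    μ (K - K) / (2 * n).choose n * μ K
        = ∫⁻ x, ENNReal.ofReal (1 - gauge (K - K) x) ^ n * μ K ∂μ := by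
      rw [lintegral_mul_const' _ _ hKt, lintegral_ofReal_one_sub_gauge_pow μ (hK.sub hK) hD₀
        (hKc.sub hKc).isClosed (hKc.sub hKc).isBounded]
    _ ≤ ∫⁻ x, μ (K ∩ (x +ᵥ K)) ∂μ :=
      lintegral_mono (hK.ofReal_one_sub_gauge_pow_mul_le_measure_inter_vadd μ hKc hD₀)
    _ = μ K * μ K := lintegral_measure_inter_vadd_self μ hKc.measurableSet
  rwa [ENNReal.mul_le_mul_iff_left hK₀ hKt,
    ENNReal.div_le_iff_le_mul (Or.inr hKt) (Or.inl (ENNReal.natCast_ne_top _)), mul_comm] at key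

end NormedSpace

theorem rogers_shephard (n : ℕ) (hn : 0 < n)
    (K : Set (EuclideanSpace ℝ (Fin n)))
    (hKc : IsCompact K) (hKconv : Convex ℝ K) (hKint : (interior K).Nonempty) :
    volume (K - K) ≤ (Nat.choose (2 * n) n : ℝ≥0∞) * volume K := by
  have : Nonempty (Fin n) := ⟨⟨0, hn⟩⟩
  simpa only [finrank_euclideanSpace_fin] using hKconv.addHaar_sub_self_le_choose_mul volume hKc
    (Measure.measure_pos_of_nonempty_interior _ hKint).ne'
end

section
/- For any convex body K in R^n containing the origin, |conv(K ∪ (-K))| ≤ 2^n |K|. -/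
/-!
Rogers–Shephard's argument. Let `C = conv (K ∪ -K)` and
`S = {(z, y) | y - z ∈ λ K and y ∈ (1 - λ) K for some λ ∈ [0, 1]} ⊆ E × E`.
With `‖·‖_W` the gauge of `W`, the fibre of `S` over `y` lies in a translate of
`-(1 - ‖y‖_K) K`, while the fibre over `z ∈ C` contains a translate of `((1 - ‖z‖_C) / 2) K`.
Since the sublevel sets of a gauge are dilates of its body, the layer cake formula gives
`∫_W (1 - ‖z‖_W)^n dz = c_n |W|` with `c_n` independent of `W`; integrating the two fibre bounds
therefore yields `2^{-n} c_n |C| |K| ≤ |S| ≤ c_n |K|^2`.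
-/

open MeasureTheory Set Pointwise Module
open scoped ENNReal

section Gauge

variable {E : Type*} [AddCommGroup E] [Module ℝ E] {W : Set E} {z : E}

theorem Convex.smul_subset_smul_of_le (hW : Convex ℝ W) (h0 : (0 : E) ∈ W) {a b : ℝ}
    (ha : 0 ≤ a) (hab : a ≤ b) : a • W ⊆ b • W := by
  obtain rfl | hb := (ha.trans hab).eq_or_lt
  · rw [le_antisymm hab ha]
  rintro _ ⟨w, hw, rfl⟩
  refine ⟨(a / b) • w,
    hW.smul_mem_of_zero_mem h0 hw ⟨by positivity, div_le_one_of_le₀ hab hb.le⟩, ?_⟩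
  change b • (a / b) • w = a • w
  rw [smul_smul, mul_div_cancel₀ _ hb.ne']

/-- The gauge of `W` truncated at `1`. Unlike `gauge W`, which is `sInf ∅ = 0` at points `W` does
not absorb, it is `1` off `W`, so that `{z | truncGauge W z ≤ r} = r • W` for `r < 1`. -/
noncomputable def truncGauge (W : Set E) (z : E) : ℝ :=
  sInf (insert 1 {t ∈ Icc (0 : ℝ) 1 | z ∈ t • W})

theorem zero_mem_lowerBounds_truncGauge_set :
    0 ∈ lowerBounds (insert 1 {t ∈ Icc (0 : ℝ) 1 | z ∈ t • W}) := by
  rintro t (rfl | ⟨⟨ht, -⟩, -⟩) <;> [exact zero_le_one; exact ht]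

theorem truncGauge_nonneg : 0 ≤ truncGauge W z :=
  le_csInf ⟨1, mem_insert _ _⟩ zero_mem_lowerBounds_truncGauge_set

theorem truncGauge_le_one : truncGauge W z ≤ 1 :=
  csInf_le ⟨0, zero_mem_lowerBounds_truncGauge_set⟩ (mem_insert _ _)

theorem truncGauge_le_of_mem_smul {r : ℝ} (hr : r ∈ Icc (0 : ℝ) 1) (hz : z ∈ r • W) :
    truncGauge W z ≤ r :=
  csInf_le ⟨0, zero_mem_lowerBounds_truncGauge_set⟩ (Or.inr ⟨hr, hz⟩)

theorem truncGauge_eq_one_of_notMem (hW : Convex ℝ W) (h0 : (0 : E) ∈ W) (hz : z ∉ W) :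
    truncGauge W z = 1 := by
  have : {t ∈ Icc (0 : ℝ) 1 | z ∈ t • W} = ∅ := by
    refine eq_empty_of_forall_notMem fun t ⟨ht, hzt⟩ => hz ?_
    simpa using hW.smul_subset_smul_of_le h0 ht.1 ht.2 hzt
  rw [truncGauge, this, insert_empty_eq, csInf_singleton]

variable [TopologicalSpace E] [ContinuousSMul ℝ E] [T2Space E]

theorem IsCompact.isClosed_setOf_mem_smul (hWc : IsCompact W) (z : E) :
    IsClosed {t ∈ Icc (0 : ℝ) 1 | z ∈ t • W} := by
  have : {t ∈ Icc (0 : ℝ) 1 | z ∈ t • W} =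
      Prod.fst '' (Icc (0 : ℝ) 1 ×ˢ W ∩ {p | p.1 • p.2 = z}) := by
    ext t
    constructor
    · rintro ⟨ht, w, hw, rfl⟩
      exact ⟨(t, w), ⟨⟨ht, hw⟩, rfl⟩, rfl⟩
    · rintro ⟨⟨t, w⟩, ⟨⟨ht, hw⟩, rfl⟩, rfl⟩
      exact ⟨ht, w, hw, rfl⟩
  rw [this]
  exact (((isCompact_Icc.prod hWc).inter_right
    (isClosed_eq (by fun_prop) continuous_const)).image continuous_fst).isClosed

theorem mem_truncGauge_smul (hWc : IsCompact W) (hz : z ∈ W) : z ∈ truncGauge W z • W := by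
  have hcl : IsClosed (insert 1 {t ∈ Icc (0 : ℝ) 1 | z ∈ t • W}) := by
    simpa only [insert_eq] using isClosed_singleton.union (hWc.isClosed_setOf_mem_smul z)
  rcases hcl.csInf_mem ⟨1, mem_insert _ _⟩ ⟨0, zero_mem_lowerBounds_truncGauge_set⟩ with h | ⟨-, h⟩
  · rwa [truncGauge, h, one_smul]
  · exact h

theorem truncGauge_le_iff (hWc : IsCompact W) (hW : Convex ℝ W) (h0 : (0 : E) ∈ W) {r : ℝ}
    (hr0 : 0 ≤ r) (hr1 : r < 1) : truncGauge W z ≤ r ↔ z ∈ r • W := by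
  refine ⟨fun h => ?_, truncGauge_le_of_mem_smul ⟨hr0, hr1.le⟩⟩
  have hz : z ∈ W := by
    by_contra hz
    rw [truncGauge_eq_one_of_notMem hW h0 hz] at h
    linarith
  exact hW.smul_subset_smul_of_le h0 truncGauge_nonneg h (mem_truncGauge_smul hWc hz)

theorem measurable_truncGauge [MeasurableSpace E] [OpensMeasurableSpace E] (hWc : IsCompact W)
    (hW : Convex ℝ W) (h0 : (0 : E) ∈ W) : Measurable (truncGauge W) := by
  refine measurable_of_Iic fun r => ?_
  rcases lt_or_ge r 0 with hr0 | hr0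
  · convert MeasurableSet.empty
    exact eq_empty_of_forall_notMem fun z hz => (truncGauge_nonneg.trans hz).not_gt hr0
  rcases lt_or_ge r 1 with hr1 | hr1
  · convert ((hWc.smul r).isClosed).measurableSet
    exact Set.ext fun z => truncGauge_le_iff hWc hW h0 hr0 hr1
  · convert MeasurableSet.univ
    exact eq_univ_of_forall fun z => truncGauge_le_one.trans hr1

end Gauge

section LayerCake

/-- `c d = ∫_W (1 - truncGauge W)^d / |W|` for every compact convex `W ∋ 0` in dimension `d`;
it equals `1 / (2d choose d)`. -/
noncomputable def gaugeWeightConst (d : ℕ) : ℝ≥0∞ :=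
  ∫⁻ t in Ioi (0 : ℝ), ENNReal.ofReal (1 - t ^ (d : ℝ)⁻¹) ^ d

theorem gaugeWeightConst_ne_top {d : ℕ} (hd : 0 < d) : gaugeWeightConst d ≠ ⊤ := by
  refine ne_top_of_le_ne_top (b := volume (Ioc (0 : ℝ) 1)) (by simp) ?_
  rw [← Iic_inter_Ioi, ← Measure.restrict_apply measurableSet_Iic,
    ← lintegral_indicator_one measurableSet_Iic]
  refine setLIntegral_mono' measurableSet_Ioi fun t ht => ?_
  rcases le_or_gt t 1 with ht1 | ht1
  · rw [indicator_of_mem (mem_Iic.mpr ht1), Pi.one_apply]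
    exact pow_le_one₀ zero_le (ENNReal.ofReal_le_one.mpr
      (by linarith [Real.rpow_nonneg (le_of_lt ht) (d : ℝ)⁻¹]))
  · have : 1 ≤ t ^ (d : ℝ)⁻¹ := Real.one_le_rpow ht1.le (by positivity)
    rw [ENNReal.ofReal_eq_zero.mpr (by linarith), zero_pow hd.ne']
    exact zero_le

theorem gaugeWeightConst_ne_zero {d : ℕ} (hd : 0 < d) : gaugeWeightConst d ≠ 0 := by
  rw [← pos_iff_ne_zero, gaugeWeightConst, setLIntegral_pos_iff (by fun_prop)]
  refine lt_of_lt_of_le (by simp) (measure_mono (s := Ioo (0 : ℝ) 1) fun t ht => ⟨?_, ht.1⟩)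
  have : t ^ (d : ℝ)⁻¹ < 1 := Real.rpow_lt_one ht.1.le ht.2 (by positivity)
  exact pow_ne_zero _ (ENNReal.ofReal_pos.mpr (by linarith)).ne'

variable {E : Type*} [NormedAddCommGroup E] [NormedSpace ℝ E] [MeasurableSpace E] [BorelSpace E]
  [FiniteDimensional ℝ E] (μ : Measure E) [μ.IsAddHaarMeasure] {W : Set E}

theorem addHaar_setOf_le_one_sub_truncGauge_pow (hWc : IsCompact W) (hW : Convex ℝ W)
    (h0 : (0 : E) ∈ W) (hd : 0 < finrank ℝ E) {t : ℝ} (ht : 0 < t) :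
    μ {z | t ≤ (1 - truncGauge W z) ^ finrank ℝ E} =
      ENNReal.ofReal (1 - t ^ (finrank ℝ E : ℝ)⁻¹) ^ finrank ℝ E * μ W := by
  set d := finrank ℝ E
  rcases le_or_gt t 1 with ht1 | ht1
  · have hr0 : 0 ≤ 1 - t ^ (d : ℝ)⁻¹ := by
      linarith [Real.rpow_le_one ht.le ht1 (by positivity : (0 : ℝ) ≤ (d : ℝ)⁻¹)]
    have hr1 : 1 - t ^ (d : ℝ)⁻¹ < 1 := by linarith [Real.rpow_pos_of_pos ht (d : ℝ)⁻¹]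
    have : {z | t ≤ (1 - truncGauge W z) ^ d} = (1 - t ^ (d : ℝ)⁻¹) • W := by
      ext z
      rw [mem_ofPred_eq, ← truncGauge_le_iff hWc hW h0 hr0 hr1, le_sub_comm,
        Real.rpow_inv_le_iff_of_pos ht.le (by linarith [truncGauge_le_one (W := W) (z := z)])
          (by positivity), Real.rpow_natCast]
    rw [this, Measure.addHaar_smul_of_nonneg μ hr0, ENNReal.ofReal_pow hr0]
  · have h1 : 1 ≤ t ^ (d : ℝ)⁻¹ := Real.one_le_rpow ht1.le (by positivity)
    have : {z | t ≤ (1 - truncGauge W z) ^ d} = ∅ := eq_empty_of_forall_notMem fun z hz =>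
      (pow_le_one₀ (sub_nonneg.mpr truncGauge_le_one)
        (by linarith [truncGauge_nonneg (W := W) (z := z)])).not_gt (ht1.trans_le hz)
    rw [this, measure_empty, ENNReal.ofReal_eq_zero.mpr (by linarith), zero_pow hd.ne', zero_mul]

theorem lintegral_one_sub_truncGauge_pow (hWc : IsCompact W) (hW : Convex ℝ W)
    (h0 : (0 : E) ∈ W) (hd : 0 < finrank ℝ E) :
    ∫⁻ z, ENNReal.ofReal (1 - truncGauge W z) ^ finrank ℝ E ∂μ =
      gaugeWeightConst (finrank ℝ E) * μ W := by
  have hmeas : Measurable fun z => (1 - truncGauge W z) ^ finrank ℝ E :=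
    (measurable_const.sub (measurable_truncGauge hWc hW h0)).pow_const _
  calc ∫⁻ z, ENNReal.ofReal (1 - truncGauge W z) ^ finrank ℝ E ∂μ
      = ∫⁻ z, ENNReal.ofReal ((1 - truncGauge W z) ^ finrank ℝ E) ∂μ := by
        simp_rw [ENNReal.ofReal_pow (sub_nonneg.mpr truncGauge_le_one)]
    _ = ∫⁻ t in Ioi 0, μ {z | t ≤ (1 - truncGauge W z) ^ finrank ℝ E} :=
        lintegral_eq_lintegral_meas_le μ (ae_of_all _ fun z =>
          pow_nonneg (sub_nonneg.mpr truncGauge_le_one) _) hmeas.aemeasurable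
    _ = gaugeWeightConst (finrank ℝ E) * μ W := by
        rw [setLIntegral_congr_fun measurableSet_Ioi fun t ht =>
          addHaar_setOf_le_one_sub_truncGauge_pow μ hWc hW h0 hd ht,
          lintegral_mul_const' _ _ hWc.measure_lt_top.ne, gaugeWeightConst]

end LayerCake

section RogersShephard

variable {E : Type*} [AddCommGroup E] [Module ℝ E] {K : Set E}

def rogersShephardSet (K : Set E) : Set (E × E) :=
  {p | ∃ l ∈ Icc (0 : ℝ) 1, p.2 - p.1 ∈ l • K ∧ p.2 ∈ (1 - l) • K}

theorem rogersShephardSet_eq_image (K : Set E) : rogersShephardSet K =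
    (fun q : ℝ × E × E => ((1 - q.1) • q.2.2 - q.1 • q.2.1, (1 - q.1) • q.2.2)) ''
      Icc 0 1 ×ˢ K ×ˢ K := by
  ext ⟨z, y⟩
  constructor
  · rintro ⟨l, hl, ⟨a, ha, hya⟩, ⟨b, hb, rfl⟩⟩
    refine ⟨(l, a, b), ⟨hl, ha, hb⟩, ?_⟩
    change l • a = (1 - l) • b - z at hya
    simp only [Prod.mk.injEq, and_true]
    rw [hya, sub_sub_cancel]
  · rintro ⟨⟨l, a, b⟩, ⟨hl, ha, hb⟩, h⟩
    simp only [Prod.mk.injEq] at h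
    obtain ⟨rfl, rfl⟩ := h
    exact ⟨l, hl, ⟨a, ha, (sub_sub_cancel _ _).symm⟩, ⟨b, hb, rfl⟩⟩

theorem Convex.convexHull_union_neg_eq_image (hK : Convex ℝ K) (hne : K.Nonempty) :
    convexHull ℝ (K ∪ -K) =
      (fun q : ℝ × E × E => (1 - q.1) • q.2.1 - q.1 • q.2.2) '' Icc 0 1 ×ˢ K ×ˢ K := by
  rw [hK.convexHull_union hK.neg hne hne.neg]
  ext x
  rw [mem_convexJoin]
  constructor
  · rintro ⟨a, ha, b, hb, hx⟩
    obtain ⟨θ, hθ, rfl⟩ := segment_eq_image ℝ a b ▸ hx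
    exact ⟨(θ, a, -b), ⟨hθ, ha, hb⟩, by simp [sub_eq_add_neg]⟩
  · rintro ⟨⟨θ, a, b⟩, ⟨hθ, ha, hb⟩, rfl⟩
    refine ⟨a, ha, -b, by simpa using hb, ?_⟩
    rw [segment_eq_image]
    exact ⟨θ, hθ, by simp [sub_eq_add_neg]⟩

theorem IsCompact.convexHull_union_neg [TopologicalSpace E] [IsTopologicalAddGroup E]
    [ContinuousSMul ℝ E] (hKc : IsCompact K) (hK : Convex ℝ K) (hne : K.Nonempty) :
    IsCompact (convexHull ℝ (K ∪ -K)) := by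
  rw [hK.convexHull_union_neg_eq_image hne]
  exact (isCompact_Icc.prod (hKc.prod hKc)).image (by fun_prop)

theorem IsCompact.rogersShephardSet [TopologicalSpace E] [IsTopologicalAddGroup E]
    [ContinuousSMul ℝ E] (hKc : IsCompact K) : IsCompact (rogersShephardSet K) := by
  rw [rogersShephardSet_eq_image]
  exact (isCompact_Icc.prod (hKc.prod hKc)).image (by fun_prop)

end RogersShephard

section Volume

variable {E : Type*} [NormedAddCommGroup E] [NormedSpace ℝ E] [MeasurableSpace E] [BorelSpace E]
  [FiniteDimensional ℝ E] (μ : Measure E) [μ.IsAddHaarMeasure] {K : Set E}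

theorem addHaar_rogersShephardSet_fiber_le (hK : Convex ℝ K) (h0 : (0 : E) ∈ K) (y : E) :
    μ ((fun z => (z, y)) ⁻¹' rogersShephardSet K) ≤
      ENNReal.ofReal (1 - truncGauge K y) ^ finrank ℝ E * μ K := by
  set m := 1 - truncGauge K y
  have hm : 0 ≤ m := sub_nonneg.mpr truncGauge_le_one
  calc μ ((fun z => (z, y)) ⁻¹' rogersShephardSet K)
      ≤ μ (y +ᵥ (-m) • K) := measure_mono ?_
    _ = ENNReal.ofReal m ^ finrank ℝ E * μ K := by
      rw [measure_vadd, Measure.addHaar_smul, abs_pow, abs_neg, abs_of_nonneg hm,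
        ENNReal.ofReal_pow hm]
  rintro z ⟨l, hl, hyz, hy⟩
  have hlm : l ≤ m := by
    linarith [truncGauge_le_of_mem_smul ⟨by linarith [hl.2], by linarith [hl.1]⟩ hy]
  obtain ⟨w, hw, hwz⟩ := hK.smul_subset_smul_of_le h0 hl.1 hlm hyz
  refine ⟨(-m) • w, smul_mem_smul_set hw, ?_⟩
  change m • w = y - z at hwz
  change y + (-m) • w = z
  rw [neg_smul, hwz, neg_sub, add_sub_cancel]

theorem le_addHaar_rogersShephardSet_fiber (hKc : IsCompact K) (hK : Convex ℝ K)
    (h0 : (0 : E) ∈ K) (hd : 0 < finrank ℝ E) (z : E) :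
    ENNReal.ofReal (1 - truncGauge (convexHull ℝ (K ∪ -K)) z) ^ finrank ℝ E * μ K ≤
      2 ^ finrank ℝ E * μ (Prod.mk z ⁻¹' rogersShephardSet K) := by
  by_cases hz : z ∈ convexHull ℝ (K ∪ -K)
  swap
  · rw [truncGauge_eq_one_of_notMem (convex_convexHull ℝ _)
      (subset_convexHull ℝ (K ∪ -K) (Or.inl h0)) hz, sub_self, ENNReal.ofReal_zero,
      zero_pow hd.ne', zero_mul]
    exact zero_le
  have ht0 : 0 ≤ truncGauge (convexHull ℝ (K ∪ -K)) z := truncGauge_nonneg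
  have ht1 : truncGauge (convexHull ℝ (K ∪ -K)) z ≤ 1 := truncGauge_le_one
  obtain ⟨p, hp, hpz⟩ := mem_truncGauge_smul (hKc.convexHull_union_neg hK ⟨0, h0⟩) hz
  generalize truncGauge (convexHull ℝ (K ∪ -K)) z = t at ht0 ht1 hpz ⊢
  rw [hK.convexHull_union_neg_eq_image ⟨0, h0⟩] at hp
  obtain ⟨⟨m, a, b⟩, ⟨hm, ha, hb⟩, rfl⟩ := hp
  dsimp only at hm ha hb hpz
  obtain ⟨s, hts⟩ : ∃ s : ℝ, 1 - t = 2 * s := ⟨(1 - t) / 2, by ring⟩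
  have hs : 0 ≤ s := by linarith
  -- `w ∈ s K` is added to both `t m b ∈ t m K` and `t (1 - m) a ∈ t (1 - m) K`;
  -- `2 s = 1 - t` makes the two resulting dilation factors sum to `1`
  have hsub : (t * (1 - m)) • a +ᵥ s • K ⊆ Prod.mk z ⁻¹' rogersShephardSet K := by
    rintro _ ⟨w, hw, rfl⟩
    refine ⟨t * m + s, ⟨by nlinarith [hm.1], by nlinarith [hm.2]⟩, ?_, ?_⟩
    · have : (t * (1 - m)) • a + w - z = (t * m) • b + w := by
        rw [← hpz, smul_sub, smul_smul, smul_smul]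
        abel
      change (t * (1 - m)) • a + w - z ∈ _
      rw [this, hK.add_smul (by nlinarith [hm.1]) hs]
      exact add_mem_add (smul_mem_smul_set hb) hw
    · change (t * (1 - m)) • a + w ∈ _
      rw [show 1 - (t * m + s) = t * (1 - m) + s by linarith,
        hK.add_smul (by nlinarith [hm.2]) hs]
      exact add_mem_add (smul_mem_smul_set ha) hw
  calc ENNReal.ofReal (1 - t) ^ finrank ℝ E * μ K
      = 2 ^ finrank ℝ E * (ENNReal.ofReal s ^ finrank ℝ E * μ K) := by
        rw [hts, ENNReal.ofReal_mul zero_le_two, ENNReal.ofReal_ofNat, mul_pow, mul_assoc]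
    _ = 2 ^ finrank ℝ E * μ ((t * (1 - m)) • a +ᵥ s • K) := by
        rw [measure_vadd, Measure.addHaar_smul_of_nonneg μ hs, ENNReal.ofReal_pow hs]
    _ ≤ 2 ^ finrank ℝ E * μ (Prod.mk z ⁻¹' rogersShephardSet K) := by gcongr

theorem addHaar_convexHull_union_neg_le (hKc : IsCompact K) (hK : Convex ℝ K)
    (hKint : (interior K).Nonempty) (h0 : (0 : E) ∈ K) :
    μ (convexHull ℝ (K ∪ -K)) ≤ 2 ^ finrank ℝ E * μ K := by
  obtain hd | hd := (finrank ℝ E).eq_zero_or_pos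
  · have : Subsingleton E := finrank_zero_iff.mp hd
    rw [hd, pow_zero, one_mul, Subsingleton.eq_univ_of_nonempty ⟨0, h0⟩]
    exact measure_mono (subset_univ _)
  set C := convexHull ℝ (K ∪ -K)
  set c := gaugeWeightConst (finrank ℝ E)
  have hS := hKc.rogersShephardSet.isClosed.measurableSet
  have hKfin : μ K ≠ ⊤ := hKc.measure_lt_top.ne
  have lower : c * μ C * μ K ≤ 2 ^ finrank ℝ E * μ.prod μ (rogersShephardSet K) := by
    rw [← lintegral_one_sub_truncGauge_pow μ (hKc.convexHull_union_neg hK ⟨0, h0⟩)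
      (convex_convexHull ℝ _) (subset_convexHull ℝ _ (Or.inl h0)) hd,
      ← lintegral_mul_const' _ _ hKfin, Measure.prod_apply hS,
      ← lintegral_const_mul' _ _ (by simp)]
    exact lintegral_mono (le_addHaar_rogersShephardSet_fiber μ hKc hK h0 hd)
  have upper : μ.prod μ (rogersShephardSet K) ≤ c * μ K * μ K := by
    rw [← lintegral_one_sub_truncGauge_pow μ hKc hK h0 hd, ← lintegral_mul_const' _ _ hKfin,
      Measure.prod_apply_symm hS]
    exact lintegral_mono (addHaar_rogersShephardSet_fiber_le μ hK h0)
  have hcK : c * μ K ≠ 0 :=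
    mul_ne_zero (gaugeWeightConst_ne_zero hd) (μ.measure_pos_of_nonempty_interior hKint).ne'
  have hcK' : c * μ K ≠ ⊤ := ENNReal.mul_ne_top (gaugeWeightConst_ne_top hd) hKfin
  refine (ENNReal.mul_le_mul_iff_right hcK hcK').mp ?_
  calc c * μ K * μ C = c * μ C * μ K := by ring
    _ ≤ 2 ^ finrank ℝ E * (c * μ K * μ K) := lower.trans (by gcongr)
    _ = c * μ K * (2 ^ finrank ℝ E * μ K) := by ring

end Volume

theorem rogers_shephard_conv_hull_general (n : ℕ)
    (K : Set (EuclideanSpace ℝ (Fin n)))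
    (hKc : IsCompact K) (hKconv : Convex ℝ K) (hKint : (interior K).Nonempty)
    (h0 : (0 : EuclideanSpace ℝ (Fin n)) ∈ K) :
    volume (convexHull ℝ (K ∪ -K)) ≤ (2 : ℝ≥0∞) ^ n * volume K := by
  simpa only [finrank_euclideanSpace_fin] using
    addHaar_convexHull_union_neg_le volume hKc hKconv hKint h0

theorem rogers_shephard_conv_hull (n : ℕ) (hn : 0 < n)
    (K : Set (EuclideanSpace ℝ (Fin n)))
    (hKc : IsCompact K) (hKconv : Convex ℝ K) (hKint : (interior K).Nonempty)
    (h0 : (0 : EuclideanSpace ℝ (Fin n)) ∈ K) :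
    volume (convexHull ℝ (K ∪ -K)) ≤ (2 : ℝ≥0∞) ^ n * volume K :=
  rogers_shephard_conv_hull_general n K hKc hKconv hKint h0
end

section
/- Let f : R^n → [0,∞) be an integrable log-concave function with full-dimensional support and ‖f‖_∞ = 1. For t ∈ (0,1) and x ∈ R^n let A_t(f)(x) = {z : f(z) f(z - x) ≥ t}. Then A_t(f)(x) ⊆ (x/2) + A_t(f)(0), where A_t(f)(0) = {z : f(z) ≥ √t}. Consequently |A_t(f)(x)| ≤ |A_t(f)(0)| for all x. -/
open MeasureTheory Set Pointwise

theorem A_t_maximum_at_zero (n : ℕ)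
    (f : EuclideanSpace ℝ (Fin n) → ℝ)
    (hf0 : ∀ x, 0 ≤ f x)
    (hf : ∀ x y : EuclideanSpace ℝ (Fin n), ∀ l : ℝ, 0 ≤ l → l ≤ 1 →
      f (l • x + (1 - l) • y) ≥ f x ^ l * f y ^ (1 - l))
    (hfi : Integrable f)
    (hfs : (interior (Function.support f)).Nonempty)
    (hsup : (⨆ x, f x) = 1)
    (t : ℝ) (ht : t ∈ Set.Ioo (0 : ℝ) 1) (x : EuclideanSpace ℝ (Fin n)) :
    {z | t ≤ f z * f (z - x)} ⊆
        ((2 : ℝ)⁻¹ • x) +ᵥ {z | Real.sqrt t ≤ f z} ∧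
      volume {z | t ≤ f z * f (z - x)} ≤ volume {z | Real.sqrt t ≤ f z} := by
  have hsub : {z | t ≤ f z * f (z - x)} ⊆
      ((2 : ℝ)⁻¹ • x) +ᵥ {z | Real.sqrt t ≤ f z} := by
    intro z hz
    refine ⟨z - (2 : ℝ)⁻¹ • x, ?_, by simp only [vadd_eq_add]; module⟩
    have heq : z - (2 : ℝ)⁻¹ • x = (2 : ℝ)⁻¹ • z + (1 - (2:ℝ)⁻¹) • (z - x) := by
      have : (1 - (2:ℝ)⁻¹) = (2:ℝ)⁻¹ := by norm_num
      rw [this, smul_sub]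
      module
    have h1 := hf z (z - x) (2 : ℝ)⁻¹ (by norm_num) (by norm_num)
    rw [← heq] at h1
    have ht0 : (0:ℝ) ≤ t := le_of_lt ht.1
    have hchain : Real.sqrt t ≤ f z ^ ((2:ℝ)⁻¹) * f (z - x) ^ (1 - (2:ℝ)⁻¹) := by
      have h2 : (1 - (2:ℝ)⁻¹ : ℝ) = (2:ℝ)⁻¹ := by norm_num
      rw [h2, ← Real.mul_rpow (hf0 _) (hf0 _), Real.sqrt_eq_rpow]
      have : (1/2 : ℝ) = (2:ℝ)⁻¹ := by norm_num
      rw [this]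
      exact Real.rpow_le_rpow ht0 hz (by norm_num)
    exact le_trans hchain h1
  refine ⟨hsub, ?_⟩
  calc volume {z | t ≤ f z * f (z - x)}
      ≤ volume (((2 : ℝ)⁻¹ • x) +ᵥ {z | Real.sqrt t ≤ f z}) := measure_mono hsub
    _ = volume {z | Real.sqrt t ≤ f z} := measure_vadd _ _ _
end

section
/- Let f : R^n → [0,∞) be an integrable log-concave function with ‖f‖_∞ = 1 and full-dimensional support. For t ∈ (0,1] and x ∈ R^n, A_t(f)(0) ∩ (x + A_t(f)(0)) ⊆ A_t(f)(x) ⊆ A_{t^2}(f)(0) ∩ (x + A_{t^2}(f)(0)), where A_t(f)(x) = {z : f(z)f(z - x) ≥ t} and A_s(f)(0) = {z : f(z) ≥ √s}. -/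
open MeasureTheory Set Pointwise

theorem A_t_inclusions (n : ℕ)
    (f : EuclideanSpace ℝ (Fin n) → ℝ)
    (hf0 : ∀ x, 0 ≤ f x)
    (hf : ∀ x y : EuclideanSpace ℝ (Fin n), ∀ l : ℝ, 0 ≤ l → l ≤ 1 →
      f (l • x + (1 - l) • y) ≥ f x ^ l * f y ^ (1 - l))
    (hfi : Integrable f)
    (hfs : (interior (Function.support f)).Nonempty)
    (hsup : (⨆ x, f x) = 1)
    (t : ℝ) (ht : t ∈ Set.Ioc (0 : ℝ) 1) (x : EuclideanSpace ℝ (Fin n)) :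
    {z | Real.sqrt t ≤ f z} ∩ (x +ᵥ {z | Real.sqrt t ≤ f z}) ⊆
        {z | t ≤ f z * f (z - x)} ∧
      {z | t ≤ f z * f (z - x)} ⊆
        {z | Real.sqrt (t ^ 2) ≤ f z} ∩ (x +ᵥ {z | Real.sqrt (t ^ 2) ≤ f z}) := by
  obtain ⟨ht0, ht1⟩ := ht
  have hbdd : BddAbove (Set.range f) := by
    by_contra h
    rw [Real.iSup_of_not_bddAbove h] at hsup
    norm_num at hsup
  have hle1 : ∀ z, f z ≤ 1 := by
    intro z
    calc f z ≤ ⨆ x, f x := le_ciSup hbdd z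
    _ = 1 := hsup
  constructor
  · rintro z ⟨hz1, hz2⟩
    rw [Set.mem_vadd_set] at hz2
    obtain ⟨y, hy, rfl⟩ := hz2
    simp only [Set.mem_setOf_eq] at *
    have : Real.sqrt t * Real.sqrt t ≤ f (x + y) * f (x + y - x) := by
      have : x + y - x = y := by abel
      rw [this]
      exact mul_le_mul hz1 hy (Real.sqrt_nonneg t) (hf0 _)
    rwa [Real.mul_self_sqrt ht0.le] at this
  · intro z hz
    simp only [Set.mem_setOf_eq] at hz
    have hst : Real.sqrt (t ^ 2) = t := by
      rw [Real.sqrt_sq ht0.le]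
    constructor
    · simp only [Set.mem_setOf_eq, hst]
      calc t ≤ f z * f (z - x) := hz
      _ ≤ f z * 1 := by
          exact mul_le_mul_of_nonneg_left (hle1 _) (hf0 _)
      _ = f z := mul_one _
    · rw [Set.mem_vadd_set]
      refine ⟨z - x, ?_, by rw [vadd_eq_add]; abel⟩
      simp only [Set.mem_setOf_eq, hst]
      calc t ≤ f z * f (z - x) := hz
      _ ≤ 1 * f (z - x) := mul_le_mul_of_nonneg_right (hle1 _) (hf0 _)
      _ = f (z - x) := one_mul _
end

section
/- Let f, g : R^n → [0,∞) be integrable log-concave functions with full-dimensional supports, continuous when restricted to them, and define (f ⊕ g)(z) = sup_{x + y = 2z} √(f(x) g(y)) and ḡ(x) = g(-x). Then ∫_{R^n} √(f(x) ḡ(x)) dx · ∫_{R^n} (f ⊕ g)(z) dz ≤ 2^n ∫_{R^n} f(x) dx · ∫_{R^n} g(x) dx. -/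
open MeasureTheory Set Pointwise
open scoped Convolution

theorem colesanti_two_functions (n : ℕ) (hn : 0 < n)
    (f g : EuclideanSpace ℝ (Fin n) → ℝ)
    (hf0 : ∀ x, 0 ≤ f x) (hg0 : ∀ x, 0 ≤ g x)
    (hf : ∀ x y : EuclideanSpace ℝ (Fin n), ∀ l : ℝ, 0 ≤ l → l ≤ 1 →
      f (l • x + (1 - l) • y) ≥ f x ^ l * f y ^ (1 - l))
    (hg : ∀ x y : EuclideanSpace ℝ (Fin n), ∀ l : ℝ, 0 ≤ l → l ≤ 1 →
      g (l • x + (1 - l) • y) ≥ g x ^ l * g y ^ (1 - l))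
    (hfi : Integrable f) (hgi : Integrable g)
    (hfs : (interior (Function.support f)).Nonempty)
    (hgs : (interior (Function.support g)).Nonempty)
    (hfc : ContinuousOn f (Function.support f))
    (hgc : ContinuousOn g (Function.support g)) :
    (∫ x, Real.sqrt (f x * g (-x))) *
        ∫ z, ⨆ x, Real.sqrt (f x * g ((2 : ℝ) • z - x)) ≤
      2 ^ n * (∫ x, f x) * ∫ x, g x := by
  classical
  set A : ℝ := ∫ x, Real.sqrt (f x * g (-x)) with hA_def
  have hIf : 0 ≤ ∫ x, f x := integral_nonneg hf0
  have hIg : 0 ≤ ∫ x, g x := integral_nonneg hg0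
  have hA0 : 0 ≤ A := integral_nonneg fun x => Real.sqrt_nonneg _
  rcases hA0.eq_or_lt with hA | hA
  · rw [← hA, zero_mul]
    positivity
  -- the convolution
  set L : ℝ →L[ℝ] ℝ →L[ℝ] ℝ := ContinuousLinearMap.mul ℝ ℝ with hL_def
  have hGint : Integrable (f ⋆[L, volume] g) := hfi.integrable_convolution L hgi
  have hGval : ∫ z, (f ⋆[L, volume] g) z = (∫ x, f x) * ∫ x, g x := by
    rw [integral_convolution L hfi hgi]
    rfl
  have hG0 : ∀ z, 0 ≤ (f ⋆[L, volume] g) z := fun z => by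
    rw [convolution_def]
    exact integral_nonneg fun w => mul_nonneg (hf0 w) (hg0 _)
  have hae : ∀ᵐ z : EuclideanSpace ℝ (Fin n), ConvolutionExistsAt f g z L volume :=
    hfi.ae_convolution_exists L hgi
  -- key a.e. bound
  have key : ∀ᵐ z : EuclideanSpace ℝ (Fin n), (⨆ x, Real.sqrt (f x * g ((2 : ℝ) • z - x)))
      ≤ 2 ^ n * (f ⋆[L, volume] g) z / A := by
    filter_upwards [hae] with z hz
    have hz' : Integrable (fun t : EuclideanSpace ℝ (Fin n) => f t * g (z - t)) := by
      simpa [ConvolutionExistsAt, hL_def] using hz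
    refine Real.iSup_le (fun x₁ => ?_)
      (div_nonneg (mul_nonneg (by positivity) (hG0 z)) hA0)
    rw [le_div_iff₀ hA]
    -- pointwise inequality
    have hpt : ∀ x : EuclideanSpace ℝ (Fin n),
        Real.sqrt (f x₁ * g ((2 : ℝ) • z - x₁)) * Real.sqrt (f x * g (-x)) ≤
          f ((1/2 : ℝ) • x₁ + (1/2 : ℝ) • x) *
            g (z - ((1/2 : ℝ) • x₁ + (1/2 : ℝ) • x)) := by
      intro x
      have h1 := hf x₁ x (1/2) (by norm_num) (by norm_num)
      have h2 := hg ((2 : ℝ) • z - x₁) (-x) (1/2) (by norm_num) (by norm_num)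
      rw [show (1 - 1/2 : ℝ) = 1/2 by norm_num] at h1 h2
      have hpoint : (1/2 : ℝ) • ((2 : ℝ) • z - x₁) + (1/2 : ℝ) • (-x)
          = z - ((1/2 : ℝ) • x₁ + (1/2 : ℝ) • x) := by module
      rw [hpoint] at h2
      have e1 : Real.sqrt (f x₁ * g ((2 : ℝ) • z - x₁)) * Real.sqrt (f x * g (-x))
          = (f x₁ ^ (1/2 : ℝ) * f x ^ (1/2 : ℝ)) *
            (g ((2 : ℝ) • z - x₁) ^ (1/2 : ℝ) * g (-x) ^ (1/2 : ℝ)) := by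
        rw [Real.sqrt_mul (hf0 _), Real.sqrt_mul (hf0 _),
          Real.sqrt_eq_rpow, Real.sqrt_eq_rpow, Real.sqrt_eq_rpow, Real.sqrt_eq_rpow]
        ring
      rw [e1]
      exact mul_le_mul h1 h2 (mul_nonneg (Real.rpow_nonneg (hg0 _) _) (Real.rpow_nonneg (hg0 _) _)) (hf0 _)
    -- the shifted/scaled integrand
    have e2 : (fun x : EuclideanSpace ℝ (Fin n) =>
          f ((1/2 : ℝ) • x₁ + (1/2 : ℝ) • x) * g (z - ((1/2 : ℝ) • x₁ + (1/2 : ℝ) • x)))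
        = fun x : EuclideanSpace ℝ (Fin n) =>
            (fun t : EuclideanSpace ℝ (Fin n) =>
              f (t + (1/2 : ℝ) • x₁) * g (z - (t + (1/2 : ℝ) • x₁))) ((1/2 : ℝ) • x) := by
      funext x
      show f ((1/2 : ℝ) • x₁ + (1/2 : ℝ) • x) * g (z - ((1/2 : ℝ) • x₁ + (1/2 : ℝ) • x))
        = f ((1/2 : ℝ) • x + (1/2 : ℝ) • x₁) * g (z - ((1/2 : ℝ) • x + (1/2 : ℝ) • x₁))
      rw [add_comm ((1/2 : ℝ) • x₁) ((1/2 : ℝ) • x)]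
    have hφint : Integrable (fun x : EuclideanSpace ℝ (Fin n) =>
        f ((1/2 : ℝ) • x₁ + (1/2 : ℝ) • x) * g (z - ((1/2 : ℝ) • x₁ + (1/2 : ℝ) • x))) := by
      rw [e2]
      exact (integrable_comp_smul_iff volume
        (fun t : EuclideanSpace ℝ (Fin n) =>
          f (t + (1/2 : ℝ) • x₁) * g (z - (t + (1/2 : ℝ) • x₁)))
        (by norm_num : (1/2 : ℝ) ≠ 0)).2 (hz'.comp_add_right _)
    have hφval : (∫ x : EuclideanSpace ℝ (Fin n), f ((1/2 : ℝ) • x₁ + (1/2 : ℝ) • x) *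
          g (z - ((1/2 : ℝ) • x₁ + (1/2 : ℝ) • x)))
        = 2 ^ n * (f ⋆[L, volume] g) z := by
      rw [e2, MeasureTheory.Measure.integral_comp_smul volume
        (fun t : EuclideanSpace ℝ (Fin n) =>
          f (t + (1/2 : ℝ) • x₁) * g (z - (t + (1/2 : ℝ) • x₁))) (1/2 : ℝ)]
      rw [MeasureTheory.integral_add_right_eq_self
        (fun w : EuclideanSpace ℝ (Fin n) => f w * g (z - w)) ((1/2 : ℝ) • x₁)]
      rw [convolution_def]
      have : |(((1:ℝ)/2) ^ Module.finrank ℝ (EuclideanSpace ℝ (Fin n)))⁻¹| = 2 ^ n := by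
        rw [finrank_euclideanSpace_fin]
        rw [abs_of_nonneg (by positivity)]
        rw [one_div, inv_pow, inv_inv]
      rw [this]
      simp [hL_def, smul_eq_mul]
    calc Real.sqrt (f x₁ * g ((2 : ℝ) • z - x₁)) * A
        = ∫ x : EuclideanSpace ℝ (Fin n), Real.sqrt (f x₁ * g ((2 : ℝ) • z - x₁)) * Real.sqrt (f x * g (-x)) := by
          rw [integral_const_mul]
      _ ≤ ∫ x : EuclideanSpace ℝ (Fin n), f ((1/2 : ℝ) • x₁ + (1/2 : ℝ) • x) *
            g (z - ((1/2 : ℝ) • x₁ + (1/2 : ℝ) • x)) := by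
          refine integral_mono_of_nonneg (Filter.Eventually.of_forall fun x => ?_) hφint
            (Filter.Eventually.of_forall hpt)
          positivity
      _ = 2 ^ n * (f ⋆[L, volume] g) z := hφval
  -- integrate the bound
  have hint : Integrable (fun z : EuclideanSpace ℝ (Fin n) => 2 ^ n * (f ⋆[L, volume] g) z / A) := by
    simpa [mul_div_assoc] using (hGint.div_const A).const_mul (2 ^ n : ℝ)
  have hmono : (∫ z, ⨆ x, Real.sqrt (f x * g ((2 : ℝ) • z - x)))
      ≤ ∫ z : EuclideanSpace ℝ (Fin n), 2 ^ n * (f ⋆[L, volume] g) z / A :=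
    integral_mono_of_nonneg
      (Filter.Eventually.of_forall fun z => Real.iSup_nonneg fun x => Real.sqrt_nonneg _)
      hint key
  have hval : (∫ z : EuclideanSpace ℝ (Fin n), 2 ^ n * (f ⋆[L, volume] g) z / A)
      = 2 ^ n * ((∫ x, f x) * ∫ x, g x) / A := by
    simp_rw [mul_div_assoc, div_eq_mul_inv, mul_comm ((f ⋆[L, volume] g) _) A⁻¹,
      ← mul_assoc]
    rw [integral_const_mul, hGval]
    ring
  rw [hval] at hmono
  calc A * ∫ z, ⨆ x, Real.sqrt (f x * g ((2 : ℝ) • z - x))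
      ≤ A * (2 ^ n * ((∫ x, f x) * ∫ x, g x) / A) :=
        mul_le_mul_of_nonneg_left hmono hA0
    _ = 2 ^ n * (∫ x, f x) * ∫ x, g x := by
        field_simp
end

section
/- For any log-concave integrable function f : R^n → [0,∞) with difference function Δf(z) = sup{√(f(x)f(-y)) : x + y = 2z}, one has ∫_{R^n} Δf(z) dz ≤ 2^n ∫_{R^n} f(x) dx. -/
/-!
Fix `z` and `x₀`. Log-concavity at midpoints gives, for every `y`,
`√(f x₀ * f (x₀ - 2z)) * f y ≤ f u * f (u - z)` with `u = (x₀ + y) / 2`. Integrating in `y`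
and substituting `u` (Jacobian `2ⁿ`) bounds `Δf(z) * ∫ f` by `2ⁿ` times the autocorrelation
`∫ f u * f (u - z) du`, whose integral over `z` is `(∫ f)²`. If `∫ f = 0`, the convex set
`{f > 0}` is null, so it spans a proper affine subspace; hence `{f > 0} - {f > 0}` is null,
and `Δf` vanishes outside `2⁻¹ • ({f > 0} - {f > 0})`.
-/

open MeasureTheory Set Pointwise
open scoped ENNReal

def IsLogConcave {E : Type*} [AddCommGroup E] [Module ℝ E] (f : E → ℝ) : Prop :=
  ∀ x y : E, ∀ l : ℝ, 0 ≤ l → l ≤ 1 → f x ^ l * f y ^ (1 - l) ≤ f (l • x + (1 - l) • y)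

/-- `Δf`, written with `y = 2z - x` eliminated from the supremum over `x + y = 2z`. -/
noncomputable def differenceFunction {E : Type*} [AddCommGroup E] [Module ℝ E] (f : E → ℝ)
    (z : E) : ℝ :=
  ⨆ x, √(f x * f (x - (2 : ℝ) • z))

theorem ENNReal.ofReal_iSup_le {ι : Sort*} {a : ι → ℝ} {c : ℝ≥0∞}
    (h : ∀ i, ENNReal.ofReal (a i) ≤ c) : ENNReal.ofReal (⨆ i, a i) ≤ c := by
  rcases eq_or_ne c ⊤ with rfl | hc
  · exact le_top
  · exact (ENNReal.ofReal_le_iff_le_toReal hc).2 <|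
      Real.iSup_le (fun i => (ENNReal.ofReal_le_iff_le_toReal hc).1 (h i)) ENNReal.toReal_nonneg

theorem integral_le_of_lintegral_ofReal_le {α : Type*} [MeasurableSpace α] {μ : Measure α}
    {g : α → ℝ} {c : ℝ} (hg : 0 ≤ᵐ[μ] g) (hc : 0 ≤ c)
    (h : ∫⁻ x, ENNReal.ofReal (g x) ∂μ ≤ ENNReal.ofReal c) : ∫ x, g x ∂μ ≤ c := by
  by_cases hint : Integrable g μ
  · rwa [← ENNReal.ofReal_le_ofReal_iff hc, ofReal_integral_eq_lintegral_ofReal hint hg]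
  · rw [integral_undef hint]
    exact hc

section LConvolution

variable {G : Type*} [AddGroup G] [MeasurableSpace G] [MeasurableAdd₂ G] [MeasurableNeg G]
  {μ : Measure G} [SFinite μ] [μ.IsAddLeftInvariant]

theorem lintegral_lconvolution {f g : G → ℝ≥0∞} (hf : AEMeasurable f μ) (hg : AEMeasurable g μ) :
    ∫⁻ x, (f ⋆ₗ[μ] g) x ∂μ = (∫⁻ x, f x ∂μ) * ∫⁻ x, g x ∂μ := by
  simp only [lconvolution_def]
  rw [lintegral_lintegral_swap (by fun_prop)]
  have hg' : ∀ y, AEMeasurable (fun x => g (-y + x)) μ := fun y =>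
    hg.comp_quasiMeasurePreserving (measurePreserving_add_left μ (-y)).quasiMeasurePreserving
  simp_rw [lintegral_const_mul'' _ (hg' _), lintegral_add_left_eq_self g]
  exact lintegral_mul_const'' _ hf

end LConvolution

namespace IsLogConcave

variable {E : Type*} [AddCommGroup E] [Module ℝ E] {f : E → ℝ}

theorem convex_setOf_pos (hf : IsLogConcave f) : Convex ℝ {x | 0 < f x} := by
  intro x hx y hy a b ha hb hab
  obtain rfl : b = 1 - a := by linarith
  exact (mul_pos (Real.rpow_pos_of_pos hx a) (Real.rpow_pos_of_pos hy _)).trans_le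
    (hf x y a ha (by linarith))

theorem sqrt_mul_le_midpoint (hf : IsLogConcave f) (hf0 : ∀ x, 0 ≤ f x) (x y : E) :
    √(f x * f y) ≤ f ((2 : ℝ)⁻¹ • (x + y)) := by
  have h := hf x y 2⁻¹ (by norm_num) (by norm_num)
  rw [show (1 : ℝ) - 2⁻¹ = 2⁻¹ by norm_num, ← smul_add,
    ← Real.mul_rpow (hf0 x) (hf0 y)] at h
  rwa [Real.sqrt_eq_rpow, one_div]

theorem sqrt_mul_mul_le (hf : IsLogConcave f) (hf0 : ∀ x, 0 ≤ f x) (a b y : E) :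
    √(f a * f b) * f y ≤ f ((2 : ℝ)⁻¹ • (a + y)) * f ((2 : ℝ)⁻¹ • (b + y)) := by
  have hsplit : √(f a * f b) * f y = √(f a * f y) * √(f b * f y) := by
    rw [← Real.sqrt_mul (mul_nonneg (hf0 a) (hf0 y)),
      show f a * f y * (f b * f y) = f a * f b * f y ^ 2 by ring,
      Real.sqrt_mul (mul_nonneg (hf0 a) (hf0 b)), Real.sqrt_sq (hf0 y)]
  rw [hsplit]
  exact mul_le_mul (hf.sqrt_mul_le_midpoint hf0 a y) (hf.sqrt_mul_le_midpoint hf0 b y)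
    (Real.sqrt_nonneg _) (hf0 _)

end IsLogConcave

section AddHaar

variable {E : Type*} [NormedAddCommGroup E] [NormedSpace ℝ E] [FiniteDimensional ℝ E]
  [MeasurableSpace E] [BorelSpace E] (μ : Measure E) [μ.IsAddHaarMeasure]

theorem lintegral_comp_smul (g : E → ℝ≥0∞) {r : ℝ} (hr : r ≠ 0) :
    ∫⁻ x, g (r • x) ∂μ = ENNReal.ofReal |(r ^ Module.finrank ℝ E)⁻¹| * ∫⁻ x, g x ∂μ := by
  rw [← smul_eq_mul, ← lintegral_smul_measure, ← Measure.map_addHaar_smul μ hr]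
  exact (lintegral_map_equiv g (Homeomorph.smulOfNeZero r hr).toMeasurableEquiv).symm

theorem lintegral_comp_half_smul_add (g : E → ℝ≥0∞) (x₀ : E) :
    ∫⁻ y, g ((2 : ℝ)⁻¹ • (x₀ + y)) ∂μ = 2 ^ Module.finrank ℝ E * ∫⁻ x, g x ∂μ := by
  rw [lintegral_add_left_eq_self (fun y => g ((2 : ℝ)⁻¹ • y)) x₀,
    lintegral_comp_smul μ g (by norm_num), inv_pow, inv_inv, abs_of_pos (by positivity),
    ENNReal.ofReal_pow zero_le_two, ENNReal.ofReal_ofNat]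

theorem Convex.addHaar_sub_self_eq_zero {C : Set E} (hC : Convex ℝ C) (h : μ C = 0) :
    μ (C - C) = 0 := by
  rcases C.eq_empty_or_nonempty with rfl | hne
  · simp
  have hspan : vectorSpan ℝ C ≠ ⊤ := by
    rw [Ne, ← AffineSubspace.affineSpan_eq_top_iff_vectorSpan_eq_top_of_nonempty ℝ E E hne,
      ← hC.interior_nonempty_iff_affineSpan_eq_top]
    intro hint
    exact (μ.measure_pos_of_nonempty_interior hint).ne' h
  exact measure_mono_null (vsub_set_subset_vectorSpan ℝ C) (μ.addHaar_submodule _ hspan)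

end AddHaar

section Difference

variable {E : Type*} [NormedAddCommGroup E] [NormedSpace ℝ E] [FiniteDimensional ℝ E]
  [MeasurableSpace E] [BorelSpace E] (μ : Measure E) [μ.IsAddHaarMeasure]
  {f : E → ℝ}

theorem IsLogConcave.ofReal_sqrt_mul_lintegral_le (hf : IsLogConcave f) (hf0 : ∀ x, 0 ≤ f x)
    (x₀ z : E) :
    ENNReal.ofReal √(f x₀ * f (x₀ - (2 : ℝ) • z)) * ∫⁻ y, ENNReal.ofReal (f y) ∂μ ≤
      2 ^ Module.finrank ℝ E *
        ((fun x => ENNReal.ofReal (f x)) ⋆ₗ[μ] fun x => ENNReal.ofReal (f (-x))) z := by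
  have hmid : ∀ y : E, (2 : ℝ)⁻¹ • (x₀ - (2 : ℝ) • z + y) = (2 : ℝ)⁻¹ • (x₀ + y) - z := by
    intro y
    rw [sub_add_eq_add_sub, smul_sub, smul_smul]
    norm_num
  calc ENNReal.ofReal √(f x₀ * f (x₀ - (2 : ℝ) • z)) * ∫⁻ y, ENNReal.ofReal (f y) ∂μ
      = ∫⁻ y, ENNReal.ofReal (√(f x₀ * f (x₀ - (2 : ℝ) • z)) * f y) ∂μ := by
        rw [← lintegral_const_mul' _ _ ENNReal.ofReal_ne_top]
        simp_rw [ENNReal.ofReal_mul (Real.sqrt_nonneg _)]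
    _ ≤ ∫⁻ y, ENNReal.ofReal (f ((2 : ℝ)⁻¹ • (x₀ + y))) *
          ENNReal.ofReal (f ((2 : ℝ)⁻¹ • (x₀ + y) - z)) ∂μ := by
        refine lintegral_mono fun y => ?_
        rw [← ENNReal.ofReal_mul (hf0 _), ← hmid]
        exact ENNReal.ofReal_le_ofReal (hf.sqrt_mul_mul_le hf0 _ _ y)
    _ = 2 ^ Module.finrank ℝ E * ∫⁻ u, ENNReal.ofReal (f u) * ENNReal.ofReal (f (u - z)) ∂μ :=
        lintegral_comp_half_smul_add μ
          (fun u => ENNReal.ofReal (f u) * ENNReal.ofReal (f (u - z))) x₀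
    _ = _ := by simp only [lconvolution_def, neg_add_eq_sub, neg_sub]

theorem IsLogConcave.differenceFunction_ae_eq_zero (hf : IsLogConcave f) (hf0 : ∀ x, 0 ≤ f x)
    (h : μ {x | 0 < f x} = 0) : differenceFunction f =ᵐ[μ] 0 := by
  set C := {x | 0 < f x}
  have hsub : {z | differenceFunction f z ≠ 0} ⊆ (2 : ℝ)⁻¹ • (C - C) := by
    intro z hz
    obtain ⟨x, hx⟩ : ∃ x, √(f x * f (x - (2 : ℝ) • z)) ≠ 0 := by
      by_contra! h0
      exact hz (by simp [differenceFunction, h0])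
    obtain ⟨hx₁, hx₂⟩ := (mul_pos_iff.1 (Real.sqrt_ne_zero'.1 hx)).resolve_right
      fun hneg => (hf0 x).not_gt hneg.1
    exact ⟨(2 : ℝ) • z, ⟨x, hx₁, x - (2 : ℝ) • z, hx₂, sub_sub_cancel _ _⟩, by simp [smul_smul]⟩
  exact measure_mono_null hsub <| by
    rw [Measure.addHaar_smul, hf.convex_setOf_pos.addHaar_sub_self_eq_zero μ h, mul_zero]

theorem IsLogConcave.lintegral_differenceFunction_le_of_ne_zero (hf : IsLogConcave f)
    (hf0 : ∀ x, 0 ≤ f x) (hfm : AEMeasurable (fun x => ENNReal.ofReal (f x)) μ)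
    (hL0 : ∫⁻ x, ENNReal.ofReal (f x) ∂μ ≠ 0) (hL : ∫⁻ x, ENNReal.ofReal (f x) ∂μ ≠ ⊤) :
    ∫⁻ z, ENNReal.ofReal (differenceFunction f z) ∂μ ≤
      2 ^ Module.finrank ℝ E * ∫⁻ x, ENNReal.ofReal (f x) ∂μ := by
  set G : E → ℝ≥0∞ := fun x => ENNReal.ofReal (f x)
  set L := ∫⁻ x, G x ∂μ
  have hpoint : ∀ z, ENNReal.ofReal (differenceFunction f z) ≤
      2 ^ Module.finrank ℝ E * (G ⋆ₗ[μ] fun x => G (-x)) z / L := fun z =>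
    ENNReal.ofReal_iSup_le fun x₀ => (ENNReal.le_div_iff_mul_le (.inl hL0) (.inl hL)).2
      (hf.ofReal_sqrt_mul_lintegral_le μ hf0 x₀ z)
  have hGneg : AEMeasurable (fun x => G (-x)) μ :=
    hfm.comp_quasiMeasurePreserving (Measure.measurePreserving_neg μ).quasiMeasurePreserving
  calc ∫⁻ z, ENNReal.ofReal (differenceFunction f z) ∂μ
      ≤ ∫⁻ z, 2 ^ Module.finrank ℝ E * (G ⋆ₗ[μ] fun x => G (-x)) z * L⁻¹ ∂μ :=
        lintegral_mono hpoint
    _ = 2 ^ Module.finrank ℝ E * (L * L) * L⁻¹ := by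
        rw [lintegral_mul_const' _ _ (ENNReal.inv_ne_top.2 hL0),
          lintegral_const_mul' _ _ (by simp), lintegral_lconvolution hfm hGneg,
          lintegral_neg_eq_self G]
    _ = 2 ^ Module.finrank ℝ E * L := by
        rw [mul_assoc, mul_assoc, ENNReal.mul_inv_cancel hL0 hL, mul_one]

theorem IsLogConcave.lintegral_differenceFunction_le (hf : IsLogConcave f)
    (hf0 : ∀ x, 0 ≤ f x) (hfm : AEMeasurable (fun x => ENNReal.ofReal (f x)) μ)
    (hL : ∫⁻ x, ENNReal.ofReal (f x) ∂μ ≠ ⊤) :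
    ∫⁻ z, ENNReal.ofReal (differenceFunction f z) ∂μ ≤
      2 ^ Module.finrank ℝ E * ∫⁻ x, ENNReal.ofReal (f x) ∂μ := by
  rcases ne_or_eq (∫⁻ x, ENNReal.ofReal (f x) ∂μ) 0 with hL0 | hL0
  · exact hf.lintegral_differenceFunction_le_of_ne_zero μ hf0 hfm hL0 hL
  have hnull : μ {x | 0 < f x} = 0 := by
    simpa [Filter.EventuallyEq, ae_iff] using (lintegral_eq_zero_iff' hfm).1 hL0
  rw [lintegral_congr_ae ((hf.differenceFunction_ae_eq_zero μ hf0 hnull).mono fun z hz => by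
    rw [hz, Pi.zero_apply])]
  simp

end Difference

theorem colesanti_difference_function (n : ℕ)
    (f : EuclideanSpace ℝ (Fin n) → ℝ)
    (hf0 : ∀ x, 0 ≤ f x)
    (hf : ∀ x y : EuclideanSpace ℝ (Fin n), ∀ l : ℝ, 0 ≤ l → l ≤ 1 →
      f (l • x + (1 - l) • y) ≥ f x ^ l * f y ^ (1 - l))
    (hfi : Integrable f) :
    (∫ z, ⨆ x, Real.sqrt (f x * f (x - (2 : ℝ) • z))) ≤ 2 ^ n * ∫ x, f x := by
  have hlc : IsLogConcave f := hf
  have hΔ0 : 0 ≤ᵐ[volume] differenceFunction f :=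
    ae_of_all _ fun z => Real.iSup_nonneg fun x => Real.sqrt_nonneg _
  have hf_int_nonneg : 0 ≤ ∫ x, f x := integral_nonneg hf0
  refine integral_le_of_lintegral_ofReal_le hΔ0 (by positivity) ?_
  have key := hlc.lintegral_differenceFunction_le volume hf0 hfi.aemeasurable.ennreal_ofReal
    hfi.lintegral_lt_top.ne
  rw [finrank_euclideanSpace_fin] at key
  rwa [ENNReal.ofReal_mul (by positivity), ENNReal.ofReal_pow zero_le_two, ENNReal.ofReal_ofNat,
    ofReal_integral_eq_lintegral_ofReal hfi (ae_of_all _ hf0)]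
end

section
/- For a convex body K in R^n with 0 ∈ K, ∫_{R^n} e^{-h_K(x)} dx = n! |K°|, where h_K(x) = max_{y ∈ K} ⟨x, y⟩ is the support function and K° = {x : ⟨x, y⟩ ≤ 1 for all y ∈ K} is the polar body. -/
/-!
Since `0 ∈ K`, the support function `h_K` is nonnegative, continuous and positively homogeneous,
and its unit sublevel set is the polar body, so `{h_K ≤ t} = t • K°` has volume `tⁿ |K°|`.
Writing `e^{-h_K(x)} = ∫_{t ≥ h_K(x)} e^{-t} dt` and exchanging the integrals gives
`∫ e^{-h_K} = ∫_0^∞ e^{-t} |{h_K ≤ t}| dt = |K°| ∫_0^∞ tⁿ e^{-t} dt = Γ(n + 1) |K°| = n! |K°|`.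
-/

open MeasureTheory Set Pointwise Module
open scoped RealInnerProductSpace Nat

section SupportFunction

variable {E : Type*} [NormedAddCommGroup E] [InnerProductSpace ℝ E]

-- For `y ∉ K` the inner supremum is `sSup ∅ = 0`, which is harmless as soon as `0 ∈ K`.
noncomputable def supportFunction (K : Set E) (x : E) : ℝ := ⨆ y ∈ K, ⟪x, y⟫

variable {K : Set E}

theorem supportFunction_smul (K : Set E) {c : ℝ} (hc : 0 ≤ c) (x : E) :
    supportFunction K (c • x) = c * supportFunction K x := by
  simp only [supportFunction, real_inner_smul_left, Real.mul_iSup_of_nonneg hc]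

theorem inner_le_supportFunction (hK : Bornology.IsBounded K) (x : E) {y : E} (hy : y ∈ K) :
    ⟪x, y⟫ ≤ supportFunction K x := by
  obtain ⟨R, hR0, hR⟩ := hK.exists_pos_norm_le
  have hbdd : ∀ z, ⨆ _ : z ∈ K, ⟪x, z⟫ ≤ ‖x‖ * R := fun z =>
    Real.iSup_le (fun hz => (real_inner_le_norm x z).trans (by gcongr; exact hR z hz))
      (by positivity)
  exact le_ciSup_of_le ⟨_, forall_mem_range.2 hbdd⟩ y (by rw [ciSup_pos hy])

theorem supportFunction_nonneg (hK : Bornology.IsBounded K) (h0 : (0 : E) ∈ K) (x : E) :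
    0 ≤ supportFunction K x := by
  simpa using inner_le_supportFunction hK x h0

theorem supportFunction_le_iff (hK : Bornology.IsBounded K) (h0 : (0 : E) ∈ K) {x : E} {a : ℝ} :
    supportFunction K x ≤ a ↔ ∀ y ∈ K, ⟪x, y⟫ ≤ a := by
  refine ⟨fun h y hy => (inner_le_supportFunction hK x hy).trans h, fun h => ?_⟩
  have ha : 0 ≤ a := by simpa using h 0 h0
  exact Real.iSup_le (fun y => Real.iSup_le (h y) ha) ha

theorem setOf_supportFunction_le_one (hK : Bornology.IsBounded K) (h0 : (0 : E) ∈ K) :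
    {x | supportFunction K x ≤ 1} = {x | ∀ y ∈ K, ⟪x, y⟫ ≤ 1} := by
  ext x
  exact supportFunction_le_iff hK h0

theorem continuous_supportFunction (hK : Bornology.IsBounded K) (h0 : (0 : E) ∈ K) :
    Continuous (supportFunction K) := by
  obtain ⟨R, -, hR⟩ := hK.exists_pos_norm_le
  refine (LipschitzWith.of_le_add_mul' R fun x z => ?_).continuous
  refine (supportFunction_le_iff hK h0).2 fun y hy => ?_
  calc ⟪x, y⟫ = ⟪z, y⟫ + ⟪x - z, y⟫ := by rw [inner_sub_left]; ring
    _ ≤ supportFunction K z + ‖x - z‖ * R := by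
      gcongr
      · exact inner_le_supportFunction hK z hy
      · exact (real_inner_le_norm _ _).trans (by gcongr; exact hR y hy)
    _ = supportFunction K z + R * dist x z := by rw [dist_eq_norm, mul_comm]

end SupportFunction

theorem lintegral_exp_neg_Ici (a : ℝ) :
    ∫⁻ t in Ici a, ENNReal.ofReal (Real.exp (-t)) = ENNReal.ofReal (Real.exp (-a)) := by
  rw [← setLIntegral_congr Ioi_ae_eq_Ici, ← ofReal_integral_eq_lintegral_ofReal,
    integral_exp_neg_Ioi]
  · exact (by simpa using exp_neg_integrableOn_Ioi a one_pos :
      IntegrableOn (fun t => Real.exp (-t)) (Ioi a))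
  · exact ae_of_all _ fun t => (Real.exp_pos _).le

theorem lintegral_exp_neg_eq_lintegral_measure_le {α : Type*} [MeasurableSpace α]
    (μ : Measure α) [SFinite μ] {g : α → ℝ} (hg : Measurable g) :
    ∫⁻ x, ENNReal.ofReal (Real.exp (-g x)) ∂μ =
      ∫⁻ t, ENNReal.ofReal (Real.exp (-t)) * μ {x | g x ≤ t} := by
  set F := {p : α × ℝ | g p.1 ≤ p.2}.indicator fun p => ENNReal.ofReal (Real.exp (-p.2))
  have hF : Measurable F :=
    (by fun_prop : Measurable fun p : α × ℝ => ENNReal.ofReal (Real.exp (-p.2))).indicator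
      (measurableSet_le (hg.comp measurable_fst) measurable_snd)
  calc ∫⁻ x, ENNReal.ofReal (Real.exp (-g x)) ∂μ = ∫⁻ x, (∫⁻ t, F (x, t)) ∂μ := by
        refine lintegral_congr fun x => ?_
        rw [← lintegral_exp_neg_Ici, ← lintegral_indicator measurableSet_Ici]
        rfl
    _ = ∫⁻ t, ∫⁻ x, F (x, t) ∂μ :=
        lintegral_lintegral_swap (f := fun x t => F (x, t)) hF.aemeasurable
    _ = ∫⁻ t, ENNReal.ofReal (Real.exp (-t)) * μ {x | g x ≤ t} := by
        refine lintegral_congr fun t => ?_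
        rw [← lintegral_indicator_const (measurableSet_le hg measurable_const)]
        rfl

theorem lintegral_exp_neg_mul_pow_Ioi (n : ℕ) :
    ∫⁻ t in Ioi 0, ENNReal.ofReal (Real.exp (-t) * t ^ n) = n ! := by
  have hpow : ∀ t : ℝ, Real.exp (-t) * t ^ ((n + 1 : ℝ) - 1) = Real.exp (-t) * t ^ n := by
    simp
  have hconv := Real.GammaIntegral_convergent (s := n + 1) (by positivity)
  have hGamma := Real.Gamma_eq_integral (s := n + 1) (by positivity)
  simp only [hpow, Real.Gamma_nat_eq_factorial] at hconv hGamma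
  rw [← ofReal_integral_eq_lintegral_ofReal hconv, ← hGamma, ENNReal.ofReal_natCast]
  filter_upwards [self_mem_ae_restrict measurableSet_Ioi] with t (ht : 0 < t)
  positivity

section Homogeneous

variable {E : Type*} [NormedAddCommGroup E] [NormedSpace ℝ E] [FiniteDimensional ℝ E]
  [MeasurableSpace E] [BorelSpace E] (μ : Measure E) [μ.IsAddHaarMeasure] {g : E → ℝ}

theorem addHaar_setOf_le_of_homogeneous (hsmul : ∀ c, 0 < c → ∀ x, g (c • x) = c * g x)
    {t : ℝ} (ht : 0 < t) :
    μ {x | g x ≤ t} = ENNReal.ofReal (t ^ finrank ℝ E) * μ {x | g x ≤ 1} := by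
  have hscale : {x | g x ≤ t} = t • {x | g x ≤ 1} := by
    ext x
    rw [mem_smul_set_iff_inv_smul_mem₀ ht.ne', mem_ofPred_eq, mem_ofPred_eq,
      hsmul _ (inv_pos.2 ht), inv_mul_le_iff₀ ht, mul_one]
  rw [hscale, Measure.addHaar_smul_of_nonneg μ ht.le]

theorem lintegral_exp_neg_of_homogeneous (hg : Measurable g) (hg0 : ∀ x, 0 ≤ g x)
    (hsmul : ∀ c, 0 < c → ∀ x, g (c • x) = c * g x) :
    ∫⁻ x, ENNReal.ofReal (Real.exp (-g x)) ∂μ = (finrank ℝ E)! * μ {x | g x ≤ 1} := by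
  have hsupp : (fun t => ENNReal.ofReal (Real.exp (-t)) * μ {x | g x ≤ t}).support ⊆ Ici 0 := by
    intro t ht
    by_contra hneg
    have hempty : {x | g x ≤ t} = ∅ :=
      eq_empty_of_forall_notMem fun x hx => hneg ((hg0 x).trans hx)
    simp [hempty] at ht
  rw [lintegral_exp_neg_eq_lintegral_measure_le μ hg, ← setLIntegral_eq_of_support_subset hsupp,
    ← setLIntegral_congr Ioi_ae_eq_Ici,
    setLIntegral_congr_fun measurableSet_Ioi fun t ht => by
      rw [addHaar_setOf_le_of_homogeneous μ hsmul ht, ← mul_assoc,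
        ← ENNReal.ofReal_mul (Real.exp_pos _).le],
    lintegral_mul_const _ (by fun_prop), lintegral_exp_neg_mul_pow_Ioi]

end Homogeneous

theorem integral_exp_support_function_general (n : ℕ)
    (K : Set (EuclideanSpace ℝ (Fin n)))
    (hKc : IsCompact K)
    (h0 : (0 : EuclideanSpace ℝ (Fin n)) ∈ interior K) :
    (∫ x, Real.exp (-(⨆ y ∈ K, ⟪x, y⟫))) =
      (n.factorial : ℝ) * (volume {x : EuclideanSpace ℝ (Fin n) |
        ∀ y ∈ K, ⟪x, y⟫ ≤ 1}).toReal := by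
  have hK := hKc.isBounded
  have hK0 := interior_subset h0
  have hcont := continuous_supportFunction hK hK0
  have hlayer := lintegral_exp_neg_of_homogeneous volume hcont.measurable
    (supportFunction_nonneg hK hK0) fun c hc => supportFunction_smul K hc.le
  rw [finrank_euclideanSpace_fin, setOf_supportFunction_le_one hK hK0] at hlayer
  have hexp : Continuous fun x => Real.exp (-supportFunction K x) := by fun_prop
  change ∫ x, Real.exp (-supportFunction K x) = _
  rw [integral_eq_lintegral_of_nonneg_ae (ae_of_all _ fun _ => (Real.exp_pos _).le)
    hexp.aestronglyMeasurable, hlayer, ENNReal.toReal_mul,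
    ENNReal.toReal_natCast]

theorem integral_exp_support_function (n : ℕ) (hn : 0 < n)
    (K : Set (EuclideanSpace ℝ (Fin n)))
    (hKc : IsCompact K) (hKconv : Convex ℝ K)
    (h0 : (0 : EuclideanSpace ℝ (Fin n)) ∈ interior K) :
    (∫ x, Real.exp (-(⨆ y ∈ K, ⟪x, y⟫))) =
      (n.factorial : ℝ) * (volume {x : EuclideanSpace ℝ (Fin n) |
        ∀ y ∈ K, ⟪x, y⟫ ≤ 1}).toReal :=
  integral_exp_support_function_general n K hKc h0
end
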